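/- With notation as in the construction of the primitive ladder elements, one has the closed formula P_n = Σ_{a_1 + 2a_2 + ... + n a_n = n} (−1)^{a_1+...+a_n+1} ((a_1+...+a_n−1)!/(a_1!...a_n!)) l_1^{a_1} ... l_n^{a_n}. -/

import Mathlib

open scoped TensorProduct
open MvPolynomial

/-- `Psi n ∈ ℚ[X_1,...,X_n]` is
`Ψ_n = Σ_{a₁ + 2a₂ + ... + n aₙ = n} X₁^{a₁}...Xₙ^{aₙ}/(a₁!...aₙ!)`,
where `X_{i+1}` is the variable `MvPolynomial.X (i : Fin n)`. -/
noncomputable def Psi (n : ℕ) : MvPolynomial (Fin n) ℚ :=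
  ∑ a ∈ (Fintype.piFinset fun _ : Fin n => Finset.range (n + 1)).filter
      (fun a => ∑ i, (i.1 + 1) * a i = n),
    ((∏ i, ((a i).factorial : ℚ))⁻¹) • ∏ i, MvPolynomial.X i ^ a i

/-!
The recursion says `l_n = Ψ_n(P_1, …, P_n)`, i.e. `Ψ_n(P_1, …, P_n)` is the coefficient of `X^n`
in `exp(Σ P_i X^i)`, so `1 + Σ l_n X^n = exp(Σ P_n X^n)`. Hence `P_n` is the coefficient of `X^n`
in `log(1 + Σ l_n X^n)`, and expanding the logarithm by the multinomial theorem gives the closed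
formula. The identity `exp(log(1 + X)) = 1 + X` behind this is proved by showing that
`exp(log(1 + X)) / (1 + X)` has derivative zero.
-/

/-- The multiplicity vectors of the partitions of `n`: `a i` is the multiplicity of the part
`i + 1`. -/
def partitionTuples (n : ℕ) : Finset (Fin n → ℕ) :=
  (Fintype.piFinset fun _ : Fin n => Finset.range (n + 1)).filter
    (fun a => ∑ i, (i.1 + 1) * a i = n)

theorem sum_le_of_sum_succ_mul_eq {n : ℕ} {a : Fin n → ℕ} (ha : ∑ i, (i.1 + 1) * a i = n) :
    ∑ i, a i ≤ n :=
  (Finset.sum_le_sum fun i _ => Nat.le_mul_of_pos_left (a i) i.1.succ_pos).trans ha.le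

theorem mem_partitionTuples {n : ℕ} {a : Fin n → ℕ} :
    a ∈ partitionTuples n ↔ ∑ i, (i.1 + 1) * a i = n := by
  refine Finset.mem_filter.trans ⟨And.right, fun ha => ⟨Fintype.mem_piFinset.mpr fun i => ?_, ha⟩⟩
  exact Finset.mem_range_succ_iff.mpr
    ((Finset.single_le_sum (fun j _ => Nat.zero_le (a j)) (Finset.mem_univ i)).trans
      (sum_le_of_sum_succ_mul_eq ha))

theorem sum_ne_zero_of_mem_partitionTuples {n : ℕ} (hn : n ≠ 0) {a : Fin n → ℕ}
    (ha : a ∈ partitionTuples n) : ∑ i, a i ≠ 0 := by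
  intro h
  rw [Finset.sum_eq_zero_iff] at h
  simp_all [mem_partitionTuples, eq_comm]

theorem single_last_mem_partitionTuples (m : ℕ) :
    Pi.single (Fin.last m) 1 ∈ partitionTuples (m + 1) := by
  simp [mem_partitionTuples, Fin.sum_univ_castSucc, Fin.castSucc_ne_last]

theorem eq_single_last_of_mem_partitionTuples {m : ℕ} {a : Fin (m + 1) → ℕ}
    (ha : a ∈ partitionTuples (m + 1)) (hlast : a (Fin.last m) ≠ 0) :
    a = Pi.single (Fin.last m) 1 := by
  rw [mem_partitionTuples, Fin.sum_univ_castSucc, Fin.val_last] at ha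
  have hge : m + 1 ≤ (m + 1) * a (Fin.last m) :=
    Nat.le_mul_of_pos_right _ (Nat.pos_of_ne_zero hlast)
  have hlow : ∑ j : Fin m, (j.castSucc.1 + 1) * a j.castSucc = 0 := by omega
  have hone : a (Fin.last m) = 1 := by
    rw [hlow, zero_add] at ha
    exact (Nat.mul_eq_left (Nat.succ_ne_zero m)).mp ha
  ext i
  refine Fin.lastCases ?_ (fun j => ?_) i
  · simp [hone]
  · have := Finset.sum_eq_zero_iff.mp hlow j (Finset.mem_univ j)
    simp_all [Fin.castSucc_ne_last]

theorem Nat.cast_multinomial_univ {ι : Type*} [Fintype ι] (a : ι → ℕ) :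
    (Nat.multinomial Finset.univ a : ℚ) = (∑ i, a i).factorial / ∏ i, ((a i).factorial : ℚ) := by
  rw [eq_div_iff (Finset.prod_ne_zero_iff.mpr fun i _ => by positivity), mul_comm]
  exact_mod_cast Nat.multinomial_spec Finset.univ a

section Psi

variable {A : Type*} [CommRing A] [Algebra ℚ A]

theorem aeval_Psi {n : ℕ} (x : Fin n → A) :
    aeval x (Psi n) = ∑ a ∈ partitionTuples n, (∏ i, ((a i).factorial : ℚ))⁻¹ • ∏ i, x i ^ a i := by
  simp [Psi, partitionTuples]

theorem aeval_zero_Psi {n : ℕ} (hn : n ≠ 0) : aeval (0 : Fin n → A) (Psi n) = 0 := by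
  rw [aeval_Psi]
  refine Finset.sum_eq_zero fun a ha => ?_
  obtain ⟨i, -, hi⟩ :=
    Finset.exists_ne_zero_of_sum_ne_zero (sum_ne_zero_of_mem_partitionTuples hn ha)
  simp only [Pi.zero_apply]
  rw [Finset.prod_eq_zero (f := fun j => (0 : A) ^ a j) (Finset.mem_univ i) (zero_pow hi),
    smul_zero]

theorem aeval_Psi_update_last_zero {m : ℕ} (x : Fin (m + 1) → A) :
    aeval (Function.update x (Fin.last m) 0) (Psi (m + 1))
      = aeval x (Psi (m + 1)) - x (Fin.last m) := by
  have hδ := single_last_mem_partitionTuples m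
  rw [aeval_Psi, aeval_Psi, ← Finset.add_sum_erase _ _ hδ, ← Finset.add_sum_erase _ _ hδ]
  have hrest : ∀ a ∈ (partitionTuples (m + 1)).erase (Pi.single (Fin.last m) 1),
      ∏ i, Function.update x (Fin.last m) 0 i ^ a i = ∏ i, x i ^ a i := by
    intro a ha
    have hlast : a (Fin.last m) = 0 := by
      by_contra h
      exact Finset.ne_of_mem_erase ha
        (eq_single_last_of_mem_partitionTuples (Finset.mem_of_mem_erase ha) h)
    simp [Fin.prod_univ_castSucc, hlast, Fin.castSucc_ne_last]
  rw [Finset.sum_congr rfl fun a ha => by rw [hrest a ha]]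
  simp [Fin.prod_univ_castSucc, Fin.castSucc_ne_last]

end Psi

namespace PowerSeries

section CommRing

variable {A : Type*} [CommRing A]

theorem constantCoeff_subst_of_constantCoeff_eq_zero {f g : A⟦X⟧} (hg : constantCoeff g = 0) :
    constantCoeff (f.subst g) = constantCoeff f := by
  rw [← coeff_zero_eq_constantCoeff_apply, coeff_subst' (HasSubst.of_constantCoeff_zero' hg),
    finsum_eq_single _ 0 fun d hd => by simp [hg, hd]]
  simp

theorem coeff_pow_eq_zero_of_lt {g : A⟦X⟧} (hg : constantCoeff g = 0) {n k : ℕ} (h : n < k) :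
    coeff n (g ^ k) = 0 :=
  X_pow_dvd_iff.mp (pow_dvd_pow_of_dvd (X_dvd_iff.mpr hg) k) n h

theorem coeff_pow_eq_sum {g : A⟦X⟧} (hg : constantCoeff g = 0) (n k : ℕ) :
    coeff n (g ^ k) = ∑ a ∈ (Finset.univ.piAntidiag k).filter
        (fun a : Fin n → ℕ => ∑ i, (i.1 + 1) * a i = n),
      (Nat.multinomial Finset.univ a : A) * ∏ i, coeff (i.1 + 1) g ^ a i := by
  classical
  set T : A⟦X⟧ := ∑ i : Fin n, C (coeff (i.1 + 1) g) * X ^ (i.1 + 1)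
  have hT : X ^ (n + 1) ∣ g - T := by
    refine X_pow_dvd_iff.mpr fun m hm => ?_
    simp only [T, map_sub, map_sum, coeff_C_mul_X_pow]
    rcases m with _ | j
    · simp [hg]
    · rw [Finset.sum_eq_single_of_mem ⟨j, by omega⟩ (Finset.mem_univ _) fun i _ hi => if_neg ?_]
      · simp
      · exact fun h => hi (Fin.ext (by simpa using h.symm))
  have hgT := X_pow_dvd_iff.mp (hT.trans (sub_dvd_pow_sub_pow g T k)) n n.lt_succ_self
  rw [map_sub, sub_eq_zero] at hgT
  rw [hgT, Finset.sum_pow_eq_sum_piAntidiag, map_sum, Finset.sum_filter]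
  refine Finset.sum_congr rfl fun a _ => ?_
  have hprod : ∏ i, (C (coeff (i.1 + 1) g) * X ^ (i.1 + 1)) ^ a i
      = C (∏ i, coeff (i.1 + 1) g ^ a i) * X ^ (∑ i : Fin n, (i.1 + 1) * a i) := by
    simp only [mul_pow, Finset.prod_mul_distrib, map_prod, map_pow, ← pow_mul,
      Finset.prod_pow_eq_pow_sum]
  rw [hprod, ← map_natCast C, ← mul_assoc, ← map_mul, coeff_C_mul_X_pow]
  split_ifs <;> first | rfl | omega

theorem coeff_subst_eq_sum (f : A⟦X⟧) {g : A⟦X⟧} (hg : constantCoeff g = 0) (n : ℕ) :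
    coeff n (f.subst g) = ∑ a ∈ partitionTuples n,
      coeff (∑ i, a i) f * ((Nat.multinomial Finset.univ a : A) * ∏ i, coeff (i.1 + 1) g ^ a i) := by
  classical
  rw [coeff_subst' (HasSubst.of_constantCoeff_zero' hg),
    finsum_eq_sum_of_support_subset (s := Finset.range (n + 1)) _ fun d hd => ?_,
    ← Finset.sum_fiberwise_of_maps_to (g := fun a : Fin n → ℕ => ∑ i, a i) fun a ha =>
      Finset.mem_range_succ_iff.mpr (sum_le_of_sum_succ_mul_eq (mem_partitionTuples.mp ha))]
  · refine Finset.sum_congr rfl fun d _ => ?_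
    rw [coeff_pow_eq_sum hg, smul_eq_mul, Finset.mul_sum]
    refine Finset.sum_congr ?_ fun a ha => by rw [(Finset.mem_filter.mp ha).2]
    ext a
    simp [mem_partitionTuples, and_comm]
  · by_contra hn
    exact hd (by simp only [coeff_pow_eq_zero_of_lt hg (by simpa using hn : n < d), smul_zero])

noncomputable def ofPos (l : ℕ → A) : A⟦X⟧ := X * mk fun m => l (m + 1)

theorem constantCoeff_ofPos (l : ℕ → A) : constantCoeff (ofPos l) = 0 := by
  simp [ofPos]

theorem coeff_ofPos (l : ℕ → A) {n : ℕ} (hn : 1 ≤ n) : coeff n (ofPos l) = l n := by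
  obtain ⟨m, rfl⟩ := Nat.exists_eq_add_of_le' hn
  simp [ofPos, coeff_succ_X_mul]

end CommRing

variable {A : Type*} [CommRing A] [Algebra ℚ A]

theorem one_add_X_mul_derivative_log : (1 + X) * d⁄dX A (log A) = 1 := by
  ext n
  rw [deriv_log, add_mul, one_mul, map_add]
  rcases n with _ | n
  · simp
  · rw [coeff_succ_X_mul]
    simp [pow_succ]

theorem exp_subst_log : (exp A).subst (log A) = 1 + X := by
  have : IsAddTorsionFree A := .of_module_rat A
  set E : A⟦X⟧ := (exp A).subst (log A)
  set g := d⁄dX A (log A)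
  have hE : d⁄dX A E = E * g := by
    rw [derivative_subst HasSubst.log, derivative_exp]
  have hg : g * g + d⁄dX A g = 0 := by
    have h : (1 + X) * d⁄dX A g + g = 0 := by
      have h := congrArg (d⁄dX A) (one_add_X_mul_derivative_log (A := A))
      rwa [Derivation.leibniz, derivative_one, map_add, derivative_one, derivative_X, zero_add,
        smul_eq_mul, smul_eq_mul, mul_one] at h
    linear_combination g * h - d⁄dX A g * one_add_X_mul_derivative_log (A := A)
  have hEg : E * g = 1 := by
    refine derivative.ext ?_ ?_
    · rw [Derivation.leibniz, hE, derivative_one, smul_eq_mul, smul_eq_mul]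
      linear_combination E * hg
    · rw [map_mul, map_one, constantCoeff_subst_of_constantCoeff_eq_zero constantCoeff_log]
      simp [g, deriv_log, ← coeff_zero_eq_constantCoeff_apply]
  calc E = E * g * (1 + X) := by
        rw [mul_assoc, mul_comm g, one_add_X_mul_derivative_log, mul_one]
    _ = 1 + X := by rw [hEg, one_mul]

theorem exp_subst_log_subst {f : A⟦X⟧} (hf : constantCoeff f = 0) :
    (exp A).subst ((log A).subst f) = 1 + f := by
  have hs := HasSubst.of_constantCoeff_zero' hf
  rw [← subst_comp_subst_apply HasSubst.log hs, exp_subst_log, ← coe_substAlgHom hs, map_add,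
    map_one, coe_substAlgHom, subst_X hs]

variable {g : A⟦X⟧}

theorem coeff_exp_subst (hg : constantCoeff g = 0) (n : ℕ) :
    coeff n ((exp A).subst g) = MvPolynomial.aeval (fun i : Fin n => coeff (i.1 + 1) g) (Psi n) := by
  rw [coeff_subst_eq_sum _ hg, aeval_Psi]
  refine Finset.sum_congr rfl fun a _ => ?_
  rw [coeff_exp, Algebra.smul_def, ← mul_assoc, ← map_natCast (algebraMap ℚ A), ← map_mul,
    Nat.cast_multinomial_univ]
  congr 2
  field_simp

theorem coeff_log_subst (hg : constantCoeff g = 0) {n : ℕ} (hn : n ≠ 0) :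
    coeff n ((log A).subst g) = ∑ a ∈ partitionTuples n,
      ((-1 : ℚ) ^ ((∑ i, a i) + 1) * (((∑ i, a i) - 1).factorial : ℚ) /
        ∏ i, ((a i).factorial : ℚ)) • ∏ i, coeff (i.1 + 1) g ^ a i := by
  rw [coeff_subst_eq_sum _ hg]
  refine Finset.sum_congr rfl fun a ha => ?_
  have hk := sum_ne_zero_of_mem_partitionTuples hn ha
  rw [coeff_log, if_neg hk, Algebra.smul_def, ← mul_assoc, ← map_natCast (algebraMap ℚ A),
    ← map_mul, Nat.cast_multinomial_univ]
  congr 2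
  obtain ⟨k, hk'⟩ := Nat.exists_eq_succ_of_ne_zero hk
  rw [hk', Nat.factorial_succ, Nat.succ_sub_one]
  push_cast
  field_simp

end PowerSeries

def PsiRecursion {A : Type*} [CommRing A] [Algebra ℚ A] (l x : ℕ → A) : Prop :=
  ∀ n, 1 ≤ n → x n = l n - aeval (fun i : Fin n => if i.1 + 1 = n then 0 else x (i.1 + 1)) (Psi n)

namespace PsiRecursion

variable {A : Type*} [CommRing A] [Algebra ℚ A] {l x y : ℕ → A}

theorem unique (hx : PsiRecursion l x) (hy : PsiRecursion l y) : ∀ n, 1 ≤ n → x n = y n := by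
  intro n
  induction n using Nat.strong_induction_on with
  | _ n ih =>
    intro hn
    have hlower : (fun i : Fin n => if i.1 + 1 = n then 0 else x (i.1 + 1))
        = fun i => if i.1 + 1 = n then 0 else y (i.1 + 1) :=
      funext fun i => if_ctx_congr Iff.rfl (fun _ => rfl) fun h => ih _ (by omega) (by omega)
    rw [hx n hn, hy n hn, hlower]

theorem of_eq_one_of_two_le (h1 : x 1 = l 1)
    (h2 : ∀ n, 2 ≤ n →
      x n = l n - aeval (fun i : Fin n => if i.1 + 1 = n then 0 else x (i.1 + 1)) (Psi n)) :
    PsiRecursion l x := by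
  intro n hn
  rcases hn.eq_or_lt with rfl | hn
  · have hzero : (fun i : Fin 1 => if i.1 + 1 = 1 then 0 else x (i.1 + 1)) = 0 := by
      funext i
      simp
    rw [hzero, aeval_zero_Psi one_ne_zero, sub_zero, h1]
  · exact h2 n hn

end PsiRecursion

namespace PowerSeries

variable {A : Type*} [CommRing A] [Algebra ℚ A]

theorem psiRecursion_coeff_log_subst {g : A⟦X⟧} (hg : constantCoeff g = 0) {l : ℕ → A}
    (hgl : ∀ n, 1 ≤ n → coeff n g = l n) :
    PsiRecursion l fun n => coeff n ((log A).subst g) := by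
  intro n hn
  obtain ⟨m, rfl⟩ := Nat.exists_eq_add_of_le' hn
  have hupdate : (fun i : Fin (m + 1) =>
        if i.1 + 1 = m + 1 then 0 else coeff (i.1 + 1) ((log A).subst g))
      = Function.update (fun i : Fin (m + 1) => coeff (i.1 + 1) ((log A).subst g)) (Fin.last m) 0 := by
    funext i
    simp [Function.update_apply, Fin.ext_iff]
  have hQ : constantCoeff ((log A).subst g) = 0 :=
    (constantCoeff_subst_of_constantCoeff_eq_zero hg).trans constantCoeff_log
  rw [hupdate, aeval_Psi_update_last_zero, ← coeff_exp_subst hQ, exp_subst_log_subst hg, map_add,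
    coeff_one, if_neg m.succ_ne_zero, zero_add, hgl _ hn]
  simp

end PowerSeries

theorem ladder_P_closed_formula_general
    (H : Type*) [CommRing H] [Bialgebra ℚ H]
    (l : ℕ → H)
    (P : ℕ → H) (hP1 : P 1 = l 1)
    (hPrec : ∀ n, 2 ≤ n →
      P n = l n - MvPolynomial.aeval
        (fun i : Fin n => if i.1 + 1 = n then 0 else P (i.1 + 1)) (Psi n)) :
    ∀ n, 1 ≤ n →
      P n = ∑ a ∈ (Fintype.piFinset fun _ : Fin n => Finset.range (n + 1)).filter
          (fun a => ∑ i, (i.1 + 1) * a i = n),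
        ((-1 : ℚ) ^ ((∑ i, a i) + 1) *
            (((∑ i, a i) - 1).factorial : ℚ) / ∏ i, ((a i).factorial : ℚ)) •
          ∏ i, l (i.1 + 1) ^ a i := by
  intro n hn
  have hL := PowerSeries.constantCoeff_ofPos l
  have hP_eq_log : P n = PowerSeries.coeff n ((PowerSeries.log H).subst (PowerSeries.ofPos l)) :=
    (PsiRecursion.of_eq_one_of_two_le hP1 hPrec).unique
      (PowerSeries.psiRecursion_coeff_log_subst hL fun _ => PowerSeries.coeff_ofPos l) n hn
  rw [hP_eq_log, PowerSeries.coeff_log_subst hL (by omega)]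
  exact Finset.sum_congr rfl fun a _ => by
    simp only [PowerSeries.coeff_ofPos l (Nat.succ_pos _)]

/-- In the Connes–Kreimer Hopf algebra of rooted trees — here axiomatized through the
ladders `l_n`, `l_0 = 1`, with the cut coproduct `Δ(l_n) = Σ_{j=0}^{n} l_j ⊗ l_{n-j}` —
the primitive elements defined by `P_1 = l_1`, `P_n = l_n − Ψ_n(P_1, ..., P_{n−1}, 0)`
satisfy the closed formula
`P_n = Σ_{a₁ + 2a₂ + ... + n aₙ = n} (−1)^{a₁+...+aₙ+1}
((a₁+...+aₙ−1)!/(a₁!...aₙ!)) l_1^{a₁} ... l_n^{aₙ}`. -/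
theorem ladder_P_closed_formula
    (H : Type*) [CommRing H] [Bialgebra ℚ H]
    (l : ℕ → H) (hl0 : l 0 = 1)
    (hl : ∀ n,
      (Coalgebra.comul (l n) : H ⊗[ℚ] H)
        = ∑ j ∈ Finset.range (n + 1), l j ⊗ₜ[ℚ] l (n - j))
    (P : ℕ → H) (hP1 : P 1 = l 1)
    (hPrec : ∀ n, 2 ≤ n →
      P n = l n - MvPolynomial.aeval
        (fun i : Fin n => if i.1 + 1 = n then 0 else P (i.1 + 1)) (Psi n)) :
    ∀ n, 1 ≤ n →
      P n = ∑ a ∈ (Fintype.piFinset fun _ : Fin n => Finset.range (n + 1)).filter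
          (fun a => ∑ i, (i.1 + 1) * a i = n),
        ((-1 : ℚ) ^ ((∑ i, a i) + 1) *
            (((∑ i, a i) - 1).factorial : ℚ) / ∏ i, ((a i).factorial : ℚ)) •
          ∏ i, l (i.1 + 1) ^ a i :=
  ladder_P_closed_formula_general H l P hP1 hPrec
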